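/- arXiv:2008.00780 — 2 statements merged into one kernel-verified Lean document; each statement's English description precedes it below -/
import Mathlib

section
/- If the approximate value function Q satisfies Q(x) ≥ V_{t+1}(x) for all x ∈ X, then for any vector μ ∈ ℝ^n and any reference state x̂ ∈ X, the Lagrangian cut H(x) := v − ⟨μ, x̂ − x⟩ with v := max_{d∈D, z∈X} { λ Σ_{s∈S} P_s(d)(r + d_s + Q(z + 1_s)) + (1 − λ Σ_s P_s(d)) Q(z) + ⟨μ, x̂ − z⟩ } satisfies H(x) ≥ V_t(x) for all x ∈ X, where V_t = T V_{t+1}. -/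
/-!
For each price vector `d`, the Bellman expression is monotone in the value function because all its
weights `λ P_s(d)` and `1 - λ Σ_s P_s(d)` are nonnegative; so replacing `V_{t+1}` by `Q ≥ V_{t+1}`
at the state `x` only increases it. The resulting real number, plus `⟨μ, x̂ - x⟩`, is one of the
candidates maximized by `v`, hence is at most `v`; subtracting `⟨μ, x̂ - x⟩` gives `H x`.
-/

open Finset

namespace EReal

theorem coe_finset_sum {ι : Type*} (s : Finset ι) (f : ι → ℝ) :
    ((∑ i ∈ s, f i : ℝ) : EReal) = ∑ i ∈ s, (f i : EReal) :=
  map_sum (⟨⟨(↑), coe_zero⟩, coe_add⟩ : ℝ →+ EReal) f s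

theorem coe_mul_le_coe_mul {c : ℝ} (hc : 0 ≤ c) {x : EReal} {y : ℝ} (h : x ≤ y) :
    (c : EReal) * x ≤ ((c * y : ℝ) : EReal) := by
  rw [coe_mul]
  exact mul_le_mul_of_nonneg_left h (by exact_mod_cast hc)

theorem sum_coe_mul_le {ι : Type*} {s : Finset ι} {p q : ι → ℝ} {u : ι → EReal}
    (hp : ∀ i ∈ s, 0 ≤ p i) (hu : ∀ i ∈ s, u i ≤ q i) :
    ∑ i ∈ s, (p i : EReal) * u i ≤ ((∑ i ∈ s, p i * q i : ℝ) : EReal) := by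
  rw [coe_finset_sum]
  exact sum_le_sum fun i hi => coe_mul_le_coe_mul (hp i hi) (hu i hi)

end EReal

theorem bellman_expression_le_of_le {ι : Type*} [Fintype ι] {lam c : ℝ} {p a q : ι → ℝ}
    {u : ι → EReal} {u₀ : EReal} {q₀ : ℝ} (hlam : 0 ≤ lam) (hp : ∀ i, 0 ≤ p i) (hc : 0 ≤ c)
    (hu : ∀ i, u i ≤ q i) (hu₀ : u₀ ≤ q₀) :
    (lam : EReal) * ∑ i, (p i : EReal) * ((a i : EReal) + u i) + (c : EReal) * u₀ ≤
      ((lam * ∑ i, p i * (a i + q i) + c * q₀ : ℝ) : EReal) := by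
  have hsum : ∑ i, (p i : EReal) * ((a i : EReal) + u i) ≤
      ((∑ i, p i * (a i + q i) : ℝ) : EReal) :=
    EReal.sum_coe_mul_le (fun i _ => hp i) fun i _ => by
      rw [EReal.coe_add]
      exact add_le_add_right (hu i) _
  rw [EReal.coe_add]
  exact add_le_add (EReal.coe_mul_le_coe_mul hlam hsum) (EReal.coe_mul_le_coe_mul hc hu₀)

theorem one_sub_mul_sum_nonneg {ι : Type*} [Fintype ι] {lam : ℝ} {p : ι → ℝ}
    (hlam₀ : 0 ≤ lam) (hlam₁ : lam ≤ 1) (hp : ∀ i, 0 ≤ p i) (hsum : ∑ i, p i < 1) :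
    0 ≤ 1 - lam * ∑ i, p i := by
  have hsum_nonneg : 0 ≤ ∑ i, p i := sum_nonneg fun i _ => hp i
  nlinarith

theorem lagrangian_cut_upper_bound_general {n : ℕ} (xbar : Fin n → ℤ)
    (D : Set (Fin n → ℝ))
    (P : (Fin n → ℝ) → Fin n → ℝ) (lam r : ℝ)
    (hlam : 0 < lam ∧ lam ≤ 1)
    (hP : ∀ d ∈ D, ∀ s, 0 ≤ P d s)
    (hPsum : ∀ d ∈ D, ∑ s, P d s < 1)
    (T : ((Fin n → ℤ) → EReal) → (Fin n → ℤ) → EReal)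
    (hT : ∀ V x, T V x = ⨆ d : D,
        ((lam : EReal) * ∑ s, ((P d s : ℝ) : EReal) *
            (((r + (d : Fin n → ℝ) s : ℝ) : EReal) + V (x + Pi.single s 1)) +
          (((1 - lam * ∑ s, P d s : ℝ) : EReal) * V x)))
    (V1 : (Fin n → ℤ) → EReal)
    (Q : (Fin n → ℤ) → ℝ)
    (hQ : ∀ x : Fin n → ℤ, V1 x ≤ (Q x : EReal))
    (μ : Fin n → ℝ) (xhat : Fin n → ℤ)
    (v : ℝ)
    -- v is the attained maximum over d ∈ D and z ∈ X of the Lagrangian relaxation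
    (hv : IsGreatest {w : ℝ | ∃ d ∈ D, ∃ z : Fin n → ℤ, 0 ≤ z ∧ z ≤ xbar ∧
        w = lam * ∑ s, P d s * (r + d s + Q (z + Pi.single s 1))
          + (1 - lam * ∑ s, P d s) * Q z
          + ∑ s, μ s * ((xhat s : ℤ) - (z s : ℤ) : ℤ)} v)
    (H : (Fin n → ℤ) → ℝ)
    (hH : ∀ x, H x = v - ∑ s, μ s * ((xhat s : ℤ) - (x s : ℤ) : ℤ)) :
    ∀ x : Fin n → ℤ, 0 ≤ x → x ≤ xbar → T V1 x ≤ (H x : EReal) := by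
  intro x hx0 hx1
  rw [hT]
  refine iSup_le fun ⟨d, hd⟩ => ?_
  have hcut := hv.2 ⟨d, hd, x, hx0, hx1, rfl⟩
  calc _ ≤ ((lam * ∑ s, P d s * (r + d s + Q (x + Pi.single s 1))
          + (1 - lam * ∑ s, P d s) * Q x : ℝ) : EReal) :=
        bellman_expression_le_of_le hlam.1.le (hP d hd)
          (one_sub_mul_sum_nonneg hlam.1.le hlam.2 (hP d hd) (hPsum d hd)) (fun s => hQ _) (hQ x)
    _ ≤ (H x : EReal) := by
        rw [hH]
        exact EReal.coe_le_coe_iff.mpr (by linarith)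

/-- The Lagrangian cut H(x) = v − ⟨μ, x̂ − x⟩ built from an upper-bounding
approximate value function Q is an upper bound on the exact value function V_t = T V_{t+1}. -/
theorem lagrangian_cut_upper_bound {n : ℕ} (xbar : Fin n → ℤ)
    (D : Set (Fin n → ℝ)) (hDne : D.Nonempty)
    (P : (Fin n → ℝ) → Fin n → ℝ) (lam r : ℝ)
    (hlam : 0 < lam ∧ lam ≤ 1)
    (hP : ∀ d ∈ D, ∀ s, 0 ≤ P d s)
    (hPsum : ∀ d ∈ D, ∑ s, P d s < 1)
    (T : ((Fin n → ℤ) → EReal) → (Fin n → ℤ) → EReal)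
    (hT : ∀ V x, T V x = ⨆ d : D,
        ((lam : EReal) * ∑ s, ((P d s : ℝ) : EReal) *
            (((r + (d : Fin n → ℝ) s : ℝ) : EReal) + V (x + Pi.single s 1)) +
          (((1 - lam * ∑ s, P d s : ℝ) : EReal) * V x)))
    (V1 : (Fin n → ℤ) → EReal)
    (hV1out : ∀ x : Fin n → ℤ, ¬(0 ≤ x ∧ x ≤ xbar) → V1 x = ⊥)
    (Q : (Fin n → ℤ) → ℝ)
    (hQ : ∀ x : Fin n → ℤ, V1 x ≤ (Q x : EReal))
    (μ : Fin n → ℝ) (xhat : Fin n → ℤ) (hxhat : 0 ≤ xhat ∧ xhat ≤ xbar)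
    (v : ℝ)
    -- v is the attained maximum over d ∈ D and z ∈ X of the Lagrangian relaxation
    (hv : IsGreatest {w : ℝ | ∃ d ∈ D, ∃ z : Fin n → ℤ, 0 ≤ z ∧ z ≤ xbar ∧
        w = lam * ∑ s, P d s * (r + d s + Q (z + Pi.single s 1))
          + (1 - lam * ∑ s, P d s) * Q z
          + ∑ s, μ s * ((xhat s : ℤ) - (z s : ℤ) : ℤ)} v)
    (H : (Fin n → ℤ) → ℝ)
    (hH : ∀ x, H x = v - ∑ s, μ s * ((xhat s : ℤ) - (x s : ℤ) : ℤ)) :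
    ∀ x : Fin n → ℤ, 0 ≤ x → x ≤ xbar → T V1 x ≤ (H x : EReal) :=
  lagrangian_cut_upper_bound_general xbar D P lam r hlam hP hPsum T hT V1 Q hQ μ xhat v hv H hH
end

section
/- For the multinomial logit model, the expected one-step revenue function p ↦ λ Σ_{s∈S} p_s (r + (ln(p_s/p₀) − β_c − β_s)/β_d + v_s) + (1 − λ Σ_{s∈S} p_s) v₀, with p₀ = 1 − Σ_{s∈S} p_s, is a concave function of p on the open simplex {p ∈ ℝ^n : p_s > 0 for all s, Σ_s p_s < 1}, when β_d < 0. -/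
/-!
Since `log (p_s / p₀) = log p_s - log p₀` and `∑ p_s = 1 - p₀`, the revenue equals an affine
function of `p` plus `(-λ / β_d) * (∑_s H(p_s) + H(p₀) + log p₀)` with `H(x) = -x log x`.
Every summand is a concave function of a single coordinate `p_s` or of the affine quantity `p₀`,
and `-λ / β_d ≥ 0`.
-/

open Finset Real

theorem ConcaveOn.sum {𝕜 E β ι : Type*} [Semiring 𝕜] [PartialOrder 𝕜] [AddCommMonoid E]
    [AddCommMonoid β] [PartialOrder β] [IsOrderedAddMonoid β] [SMul 𝕜 E] [Module 𝕜 β]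
    {s : Set E} (hs : Convex 𝕜 s) (t : Finset ι) {f : ι → E → β}
    (hf : ∀ i ∈ t, ConcaveOn 𝕜 s (f i)) : ConcaveOn 𝕜 s fun x => ∑ i ∈ t, f i x := by
  classical
  induction t using Finset.induction_on with
  | empty => simpa using concaveOn_const 0 hs
  | insert i t hi ih =>
    simp only [sum_insert hi]
    exact (hf i (mem_insert_self i t)).add (ih fun j hj => hf j (mem_insert_of_mem hj))

section OpenSimplex

variable {ι : Type*}

theorem ConcaveOn.comp_eval {φ : ℝ → ℝ} {t : Set ℝ} (hφ : ConcaveOn ℝ t φ)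
    {s : Set (ι → ℝ)} (hs : Convex ℝ s) (i : ι) (hst : ∀ p ∈ s, p i ∈ t) :
    ConcaveOn ℝ s fun p => φ (p i) :=
  (hφ.comp_linearMap (LinearMap.proj (R := ℝ) (φ := fun _ : ι => ℝ) i)).subset hst hs

variable [Fintype ι]

theorem ConcaveOn.comp_one_sub_sum {φ : ℝ → ℝ} {t : Set ℝ} (hφ : ConcaveOn ℝ t φ)
    {s : Set (ι → ℝ)} (hs : Convex ℝ s) (hst : ∀ p ∈ s, 1 - ∑ i, p i ∈ t) :
    ConcaveOn ℝ s fun p => φ (1 - ∑ i, p i) := by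
  let g : (ι → ℝ) →ᵃ[ℝ] ℝ :=
    AffineMap.const ℝ (ι → ℝ) (1 : ℝ) - (∑ i, LinearMap.proj i : (ι → ℝ) →ₗ[ℝ] ℝ).toAffineMap
  have hg (p : ι → ℝ) : g p = 1 - ∑ i, p i := by simp [g]
  refine ((hφ.comp_affineMap g).subset (fun p hp => ?_) hs).congr fun p _ => ?_
  · simpa [hg] using hst p hp
  · simp [hg]

def openSimplex (ι : Type*) [Fintype ι] : Set (ι → ℝ) :=
  {p | (∀ i, 0 < p i) ∧ ∑ i, p i < 1}

theorem convex_openSimplex : Convex ℝ (openSimplex ι) := by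
  have hsum : IsLinearMap ℝ fun p : ι → ℝ => ∑ i, p i :=
    ⟨fun p q => sum_add_distrib, fun c p => (mul_sum ..).symm⟩
  have hset : openSimplex ι = (⋂ i, {p | 0 < p i}) ∩ {p | ∑ i, p i < 1} := by
    ext p; simp [openSimplex]
  rw [hset]
  exact (convex_iInter fun i => convex_halfSpace_gt (LinearMap.proj i).isLinear 0).inter
    (convex_halfSpace_lt hsum 1)

theorem sum_mul_log_div_one_sub_sum (p : ι → ℝ) (h : ∑ i, p i ≠ 1) :
    ∑ i, p i * log (p i / (1 - ∑ j, p j)) =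
      -(∑ i, negMulLog (p i) + negMulLog (1 - ∑ i, p i) + log (1 - ∑ i, p i)) := by
  have h0 : 1 - ∑ i, p i ≠ 0 := sub_ne_zero.2 (Ne.symm h)
  have hterm (i : ι) : p i * log (p i / (1 - ∑ j, p j)) =
      -negMulLog (p i) - p i * log (1 - ∑ j, p j) := by
    rcases eq_or_ne (p i) 0 with hi | hi
    · simp [hi]
    · rw [log_div hi h0, negMulLog]; ring
  rw [sum_congr rfl fun i _ => hterm i, sum_sub_distrib, ← sum_mul, sum_neg_distrib, negMulLog]
  ring

theorem mnl_revenue_eq (lam r βc βd v0 : ℝ) (β v p : ι → ℝ) (h : ∑ i, p i ≠ 1) :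
    lam * ∑ s, p s * (r + (log (p s / (1 - ∑ k, p k)) - βc - β s) / βd + v s)
        + (1 - lam * ∑ s, p s) * v0 =
      v0 + ∑ s, ((lam * (r + v s - (βc + β s) / βd) - lam * v0) * p s
          + -lam / βd * negMulLog (p s))
        + -lam / βd * (negMulLog (1 - ∑ i, p i) + log (1 - ∑ i, p i)) := by
  have hsplit (s : ι) : p s * (r + (log (p s / (1 - ∑ k, p k)) - βc - β s) / βd + v s) =
      p s * (r + v s - (βc + β s) / βd) + p s * log (p s / (1 - ∑ k, p k)) / βd := by ring
  have hlin : ∑ s, (lam * (r + v s - (βc + β s) / βd) - lam * v0) * p s =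
      lam * ∑ s, p s * (r + v s - (βc + β s) / βd) - lam * v0 * ∑ s, p s := by
    rw [mul_sum, mul_sum, ← sum_sub_distrib]
    exact sum_congr rfl fun s _ => by ring
  rw [sum_congr rfl fun s _ => hsplit s, sum_add_distrib, ← sum_div,
    sum_mul_log_div_one_sub_sum p h, sum_add_distrib, hlin, ← mul_sum]
  ring

end OpenSimplex

/-- For the multinomial logit model with βd < 0, the expected one-step
revenue, as a function of the purchase probabilities p on the open simplex, is concave. -/
theorem mnl_revenue_concave {n : ℕ} (lam r : ℝ) (hlam : 0 < lam ∧ lam ≤ 1)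
    (βc : ℝ) (β : Fin n → ℝ) (βd : ℝ) (hβd : βd < 0)
    (v0 : ℝ) (v : Fin n → ℝ)
    (f : (Fin n → ℝ) → ℝ)
    (hf : ∀ p, f p = lam * ∑ s, p s *
        (r + (Real.log (p s / (1 - ∑ k, p k)) - βc - β s) / βd + v s)
      + (1 - lam * ∑ s, p s) * v0) :
    ConcaveOn ℝ {p : Fin n → ℝ | (∀ s, 0 < p s) ∧ ∑ s, p s < 1} f := by
  set c := -lam / βd
  have hc : 0 ≤ c := div_nonneg_of_nonpos (neg_nonpos.2 hlam.1.le) hβd.le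
  have hD := convex_openSimplex (ι := Fin n)
  have hinside (s : Fin n) : ConcaveOn ℝ (openSimplex (Fin n)) fun p =>
      (lam * (r + v s - (βc + β s) / βd) - lam * v0) * p s + c * negMulLog (p s) :=
    (((LinearMap.mulLeft ℝ _).concaveOn (convex_Ici 0)).add
      (concaveOn_negMulLog.smul hc)).comp_eval hD s fun p hp => (hp.1 s).le
  have houtside : ConcaveOn ℝ (openSimplex (Fin n)) fun p =>
      c * (negMulLog (1 - ∑ i, p i) + log (1 - ∑ i, p i)) :=
    (((concaveOn_negMulLog.subset Set.Ioi_subset_Ici_self (convex_Ioi 0)).add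
      strictConcaveOn_log_Ioi.concaveOn).smul hc).comp_one_sub_sum hD
      fun p hp => sub_pos.2 hp.2
  refine (((concaveOn_const v0 hD).add (ConcaveOn.sum hD univ fun s _ => hinside s)).add
    houtside).congr fun p hp => ?_
  rw [hf, mnl_revenue_eq _ _ _ _ _ _ _ _ hp.2.ne]
  rfl
end
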